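/- Let Δ: A → M(A⊗A) be a weakly non-degenerate homomorphism with canonical idempotent E. Then there is a unique homomorphism Δ₁: M(A) → M(A⊗A) extending Δ and satisfying Δ₁(1) = E. -/
import Mathlib


open scoped TensorProduct

/-- The product of a non-unital algebra is non-degenerate. -/
def NonDeg (A : Type*) [Mul A] [Zero A] : Prop :=
  (∀ a : A, (∀ b : A, a * b = 0) → a = 0) ∧ (∀ b : A, (∀ a : A, a * b = 0) → b = 0)

/-- A multiplier of a non-unital algebra: a pair of linear maps `(l, r)` with
`b * l a = r b * a` for all `a b`. -/
structure Multiplier (A : Type*) [NonUnitalNonAssocSemiring A] [Module ℂ A] where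
  l : A →ₗ[ℂ] A
  r : A →ₗ[ℂ] A
  compat : ∀ a b : A, b * l a = r b * a

namespace Multiplier

variable {A : Type*}

section Basic
variable [NonUnitalNonAssocSemiring A] [Module ℂ A]

instance : Zero (Multiplier A) :=
  ⟨⟨0, 0, fun a b => by simp⟩⟩

instance : One (Multiplier A) :=
  ⟨⟨LinearMap.id, LinearMap.id, fun _ _ => rfl⟩⟩

instance : Add (Multiplier A) :=
  ⟨fun x y => ⟨x.l + y.l, x.r + y.r, fun a b => by
    simp only [LinearMap.add_apply, mul_add, add_mul, x.compat, y.compat]⟩⟩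

end Basic

section Assoc
variable [NonUnitalSemiring A] [Module ℂ A]

instance : Mul (Multiplier A) :=
  ⟨fun x y => ⟨x.l ∘ₗ y.l, y.r ∘ₗ x.r, fun a b => by
    simp only [LinearMap.comp_apply]
    rw [x.compat, y.compat]⟩⟩

variable [SMulCommClass ℂ A A] [IsScalarTower ℂ A A]

instance : SMul ℂ (Multiplier A) :=
  ⟨fun s x => ⟨s • x.l, s • x.r, fun a b => by
    simp only [LinearMap.smul_apply]
    rw [mul_smul_comm, smul_mul_assoc, x.compat]⟩⟩

/-- The canonical embedding of `A` into its multiplier algebra. -/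
def emb (c : A) : Multiplier A :=
  ⟨{ toFun := fun a => c * a
     map_add' := mul_add c
     map_smul' := fun s a => mul_smul_comm s c a },
   { toFun := fun b => b * c
     map_add' := fun a b => add_mul a b c
     map_smul' := fun s a => smul_mul_assoc s a c },
   fun a b => (mul_assoc b c a).symm⟩

end Assoc

end Multiplier

theorem Multiplier.ext' {A : Type*} [NonUnitalNonAssocSemiring A] [Module ℂ A]
    {x y : Multiplier A} (hl : x.l = y.l) (hr : x.r = y.r) : x = y := by
  cases x; cases y; cases hl; cases hr; rfl

theorem Multiplier.one_mul' {A : Type*} [NonUnitalSemiring A] [Module ℂ A]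
    (m : Multiplier A) : 1 * m = m :=
  Multiplier.ext' (LinearMap.id_comp _) (LinearMap.comp_id _)

theorem Multiplier.mul_one' {A : Type*} [NonUnitalSemiring A] [Module ℂ A]
    (m : Multiplier A) : m * 1 = m :=
  Multiplier.ext' (LinearMap.comp_id _) (LinearMap.id_comp _)

/-- A weakly non-degenerate homomorphism `Δ : A → M(A⊗A)` with canonical idempotent `E`
has a unique homomorphic extension `Δ₁ : M(A) → M(A⊗A)` with `Δ₁(1) = E`. -/
theorem statement12 {A : Type*}
    [NonUnitalRing A] [Module ℂ A] [SMulCommClass ℂ A A] [IsScalarTower ℂ A A]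
    (hA : NonDeg A) (hT : NonDeg (A ⊗[ℂ] A))
    (Δ : A → Multiplier (A ⊗[ℂ] A))
    (hΔadd : ∀ a a' : A, Δ (a + a') = Δ a + Δ a')
    (hΔmul : ∀ a a' : A, Δ (a * a') = Δ a * Δ a')
    (E : Multiplier (A ⊗[ℂ] A)) (hE : E * E = E)
    (hw1 : Submodule.span ℂ {x : A ⊗[ℂ] A | ∃ (c : A) (u : A ⊗[ℂ] A), x = (Δ c).l u} =
      LinearMap.range E.l)
    (hw2 : Submodule.span ℂ {x : A ⊗[ℂ] A | ∃ (c : A) (u : A ⊗[ℂ] A), x = (Δ c).r u} =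
      LinearMap.range E.r) :
    ∃! Δ₁ : Multiplier A → Multiplier (A ⊗[ℂ] A),
      (∀ x y : Multiplier A, Δ₁ (x + y) = Δ₁ x + Δ₁ y) ∧
      (∀ x y : Multiplier A, Δ₁ (x * y) = Δ₁ x * Δ₁ y) ∧
      Δ₁ 1 = E ∧
      (∀ a : A, Δ₁ (Multiplier.emb a) = Δ a) := by
  classical
  obtain ⟨hA1, hA2⟩ := hA
  obtain ⟨hT1, hT2⟩ := hT
  -- basic consequences of E * E = E
  have hEll : ∀ x, E.l (E.l x) = E.l x := fun x =>
    DFunLike.congr_fun (congrArg Multiplier.l hE) x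
  have hErr : ∀ x, E.r (E.r x) = E.r x := fun x =>
    DFunLike.congr_fun (congrArg Multiplier.r hE) x
  -- multiplicativity/additivity at the level of components
  have Dmull : ∀ (a b : A) (x : A ⊗[ℂ] A), (Δ (a * b)).l x = (Δ a).l ((Δ b).l x) :=
    fun a b x => DFunLike.congr_fun (congrArg Multiplier.l (hΔmul a b)) x
  have Dmulr : ∀ (a b : A) (x : A ⊗[ℂ] A), (Δ (a * b)).r x = (Δ b).r ((Δ a).r x) :=
    fun a b x => DFunLike.congr_fun (congrArg Multiplier.r (hΔmul a b)) x
  have Daddl : ∀ (a b : A) (x : A ⊗[ℂ] A), (Δ (a + b)).l x = (Δ a).l x + (Δ b).l x :=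
    fun a b x => DFunLike.congr_fun (congrArg Multiplier.l (hΔadd a b)) x
  have Daddr : ∀ (a b : A) (x : A ⊗[ℂ] A), (Δ (a + b)).r x = (Δ a).r x + (Δ b).r x :=
    fun a b x => DFunLike.congr_fun (congrArg Multiplier.r (hΔadd a b)) x
  -- membership facts
  have memL : ∀ {y : A ⊗[ℂ] A}, (∃ (c : A) (u : A ⊗[ℂ] A), y = (Δ c).l u) → E.l y = y := by
    intro y hy
    have h : y ∈ LinearMap.range E.l := by rw [← hw1]; exact Submodule.subset_span hy
    obtain ⟨t, ht⟩ := h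
    rw [← ht, hEll]
  have memR : ∀ {y : A ⊗[ℂ] A}, (∃ (c : A) (u : A ⊗[ℂ] A), y = (Δ c).r u) → E.r y = y := by
    intro y hy
    have h : y ∈ LinearMap.range E.r := by rw [← hw2]; exact Submodule.subset_span hy
    obtain ⟨t, ht⟩ := h
    rw [← ht, hErr]
  -- Δ(c) absorbs E
  have DlE : ∀ (c : A) (x : A ⊗[ℂ] A), (Δ c).l (E.l x) = (Δ c).l x := by
    intro c x
    refine sub_eq_zero.mp (hT2 _ fun v => ?_)
    rw [mul_sub, (Δ c).compat (E.l x) v, (Δ c).compat x v,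
      E.compat x ((Δ c).r v), memR ⟨c, v, rfl⟩, sub_self]
  have DrE : ∀ (c : A) (x : A ⊗[ℂ] A), (Δ c).r (E.r x) = (Δ c).r x := by
    intro c x
    refine sub_eq_zero.mp (hT1 _ fun u => ?_)
    have h3 : E.l ((Δ c).l u) = (Δ c).l u := memL ⟨c, u, rfl⟩
    have h4 : E.r x * (Δ c).l u = x * (Δ c).l u := by
      rw [← E.compat ((Δ c).l u) x, h3]
    rw [sub_mul, ← (Δ c).compat u (E.r x), ← (Δ c).compat u x, h4, sub_self]
  -- kill lemmas
  have killL : ∀ z : A ⊗[ℂ] A, E.l z = z → (∀ c : A, (Δ c).l z = 0) → z = 0 := by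
    intro z hz hc
    refine hT2 z fun v => ?_
    have h1 : v * z = E.r v * z := by
      conv_lhs => rw [← hz]
      exact E.compat z v
    have hv : E.r v ∈ Submodule.span ℂ {x : A ⊗[ℂ] A | ∃ (c : A) (u : A ⊗[ℂ] A), x = (Δ c).r u} := by
      rw [hw2]; exact ⟨v, rfl⟩
    have main : ∀ w ∈ Submodule.span ℂ {x : A ⊗[ℂ] A | ∃ (c : A) (u : A ⊗[ℂ] A), x = (Δ c).r u},
        w * z = 0 := by
      intro w hw
      induction hw using Submodule.span_induction with
      | mem t ht =>
        obtain ⟨c, u, rfl⟩ := ht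
        rw [← (Δ c).compat z u, hc c, mul_zero]
      | zero => rw [zero_mul]
      | add x y _ _ ihx ihy => rw [add_mul, ihx, ihy, add_zero]
      | smul r x _ ih => rw [smul_mul_assoc, ih, smul_zero]
    rw [h1]; exact main _ hv
  have killR : ∀ z : A ⊗[ℂ] A, E.r z = z → (∀ c : A, (Δ c).r z = 0) → z = 0 := by
    intro z hz hc
    refine hT1 z fun u => ?_
    have h1 : z * u = z * E.l u := by
      rw [E.compat u z, hz]
    have hu : E.l u ∈ Submodule.span ℂ {x : A ⊗[ℂ] A | ∃ (c : A) (u : A ⊗[ℂ] A), x = (Δ c).l u} := by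
      rw [hw1]; exact ⟨u, rfl⟩
    have main : ∀ w ∈ Submodule.span ℂ {x : A ⊗[ℂ] A | ∃ (c : A) (u : A ⊗[ℂ] A), x = (Δ c).l u},
        z * w = 0 := by
      intro w hw
      induction hw using Submodule.span_induction with
      | mem t ht =>
        obtain ⟨c, u', rfl⟩ := ht
        rw [(Δ c).compat u' z, hc c, zero_mul]
      | zero => rw [mul_zero]
      | add x y _ _ ihx ihy => rw [mul_add, ihx, ihy, add_zero]
      | smul r x _ ih => rw [mul_smul_comm, ih, smul_zero]
    rw [h1]; exact main _ hu
  -- existence of the left component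
  have exL : ∀ (m : Multiplier A) (x : A ⊗[ℂ] A),
      ∃ y, E.l y = y ∧ ∀ c : A, (Δ c).l y = (Δ (m.r c)).l (E.l x) := by
    intro m x
    have hx : E.l x ∈ Submodule.span ℂ {x : A ⊗[ℂ] A | ∃ (c : A) (u : A ⊗[ℂ] A), x = (Δ c).l u} := by
      rw [hw1]; exact ⟨x, rfl⟩
    have main : ∀ u ∈ Submodule.span ℂ {x : A ⊗[ℂ] A | ∃ (c : A) (u : A ⊗[ℂ] A), x = (Δ c).l u},
        ∃ y, E.l y = y ∧ ∀ c : A, (Δ c).l y = (Δ (m.r c)).l u := by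
      intro u hu
      induction hu using Submodule.span_induction with
      | mem t ht =>
        obtain ⟨a, v, rfl⟩ := ht
        refine ⟨(Δ (m.l a)).l v, memL ⟨_, _, rfl⟩, fun c => ?_⟩
        rw [← Dmull, ← Dmull, m.compat a c]
      | zero => exact ⟨0, map_zero _, fun c => by rw [map_zero, map_zero]⟩
      | add x y _ _ ihx ihy =>
        obtain ⟨y1, h1, h1'⟩ := ihx
        obtain ⟨y2, h2, h2'⟩ := ihy
        exact ⟨y1 + y2, by rw [map_add, h1, h2],
          fun c => by rw [map_add, h1' c, h2' c, map_add]⟩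
      | smul r x _ ih =>
        obtain ⟨y, h, h'⟩ := ih
        exact ⟨r • y, by rw [map_smul, h], fun c => by rw [map_smul, h' c, map_smul]⟩
    exact main _ hx
  -- existence of the right component
  have exR : ∀ (m : Multiplier A) (x : A ⊗[ℂ] A),
      ∃ y, E.r y = y ∧ ∀ c : A, (Δ c).r y = (Δ (m.l c)).r (E.r x) := by
    intro m x
    have hx : E.r x ∈ Submodule.span ℂ {x : A ⊗[ℂ] A | ∃ (c : A) (u : A ⊗[ℂ] A), x = (Δ c).r u} := by
      rw [hw2]; exact ⟨x, rfl⟩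
    have main : ∀ u ∈ Submodule.span ℂ {x : A ⊗[ℂ] A | ∃ (c : A) (u : A ⊗[ℂ] A), x = (Δ c).r u},
        ∃ y, E.r y = y ∧ ∀ c : A, (Δ c).r y = (Δ (m.l c)).r u := by
      intro u hu
      induction hu using Submodule.span_induction with
      | mem t ht =>
        obtain ⟨a, v, rfl⟩ := ht
        refine ⟨(Δ (m.r a)).r v, memR ⟨_, _, rfl⟩, fun c => ?_⟩
        rw [← Dmulr, ← Dmulr, m.compat c a]
      | zero => exact ⟨0, map_zero _, fun c => by rw [map_zero, map_zero]⟩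
      | add x y _ _ ihx ihy =>
        obtain ⟨y1, h1, h1'⟩ := ihx
        obtain ⟨y2, h2, h2'⟩ := ihy
        exact ⟨y1 + y2, by rw [map_add, h1, h2],
          fun c => by rw [map_add, h1' c, h2' c, map_add]⟩
      | smul r x _ ih =>
        obtain ⟨y, h, h'⟩ := ih
        exact ⟨r • y, by rw [map_smul, h], fun c => by rw [map_smul, h' c, map_smul]⟩
    exact main _ hx
  choose Lf hLf1 hLf2 using exL
  choose Rf hRf1 hRf2 using exR
  -- characterizations
  have charL : ∀ (m : Multiplier A) (x y : A ⊗[ℂ] A), E.l y = y →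
      (∀ c : A, (Δ c).l y = (Δ (m.r c)).l (E.l x)) → Lf m x = y := by
    intro m x y h1 h2
    refine sub_eq_zero.mp (killL _ (by rw [map_sub, hLf1, h1]) fun c => ?_)
    rw [map_sub, hLf2, h2, sub_self]
  have charR : ∀ (m : Multiplier A) (x y : A ⊗[ℂ] A), E.r y = y →
      (∀ c : A, (Δ c).r y = (Δ (m.l c)).r (E.r x)) → Rf m x = y := by
    intro m x y h1 h2
    refine sub_eq_zero.mp (killR _ (by rw [map_sub, hRf1, h1]) fun c => ?_)
    rw [map_sub, hRf2, h2, sub_self]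
  -- linearity in the vector variable
  have Ladd : ∀ m (x y : A ⊗[ℂ] A), Lf m (x + y) = Lf m x + Lf m y := by
    intro m x y
    refine charL m (x + y) _ (by rw [map_add, hLf1, hLf1]) fun c => ?_
    rw [map_add, hLf2, hLf2, map_add, map_add]
  have Lsmul : ∀ m (r : ℂ) (x : A ⊗[ℂ] A), Lf m (r • x) = r • Lf m x := by
    intro m r x
    refine charL m (r • x) _ (by rw [map_smul, hLf1]) fun c => ?_
    rw [map_smul, hLf2, map_smul, map_smul]
  have Radd : ∀ m (x y : A ⊗[ℂ] A), Rf m (x + y) = Rf m x + Rf m y := by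
    intro m x y
    refine charR m (x + y) _ (by rw [map_add, hRf1, hRf1]) fun c => ?_
    rw [map_add, hRf2, hRf2, map_add, map_add]
  have Rsmul : ∀ m (r : ℂ) (x : A ⊗[ℂ] A), Rf m (r • x) = r • Rf m x := by
    intro m r x
    refine charR m (r • x) _ (by rw [map_smul, hRf1]) fun c => ?_
    rw [map_smul, hRf2, map_smul, map_smul]
  have RErEq : ∀ m (x : A ⊗[ℂ] A), Rf m (E.r x) = Rf m x := by
    intro m x
    refine charR m (E.r x) _ (hRf1 m x) fun c => ?_
    rw [hRf2, hErr]
  -- the multiplier property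
  have hcompat : ∀ m (a b : A ⊗[ℂ] A), b * Lf m a = Rf m b * a := by
    intro m a b
    have inner : ∀ (c : A) (w z : A ⊗[ℂ] A),
        (∀ e : A, (Δ e).r z = (Δ (m.l e)).r ((Δ c).r w)) →
        ∀ u ∈ Submodule.span ℂ {x : A ⊗[ℂ] A | ∃ (c : A) (u : A ⊗[ℂ] A), x = (Δ c).l u},
          z * u = w * (Δ (m.r c)).l u := by
      intro c w z hz u hu
      induction hu using Submodule.span_induction with
      | mem t ht =>
        obtain ⟨a', x, rfl⟩ := ht
        rw [(Δ a').compat x z, hz a', ← Dmulr, ← (Δ (c * m.l a')).compat x w,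
          ← Dmull, m.compat a' c]
      | zero => rw [mul_zero, map_zero, mul_zero]
      | add x y _ _ ihx ihy => rw [mul_add, ihx, ihy, map_add, mul_add]
      | smul r x _ ih => rw [mul_smul_comm, ih, map_smul, mul_smul_comm]
    have outer : ∀ v ∈ Submodule.span ℂ {x : A ⊗[ℂ] A | ∃ (c : A) (u : A ⊗[ℂ] A), x = (Δ c).r u},
        v * Lf m a = Rf m v * E.l a := by
      intro v hv
      induction hv using Submodule.span_induction with
      | mem t ht =>
        obtain ⟨c, w, rfl⟩ := ht
        rw [← (Δ c).compat (Lf m a) w, hLf2]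
        have hz : ∀ e : A, (Δ e).r (Rf m ((Δ c).r w)) = (Δ (m.l e)).r ((Δ c).r w) := by
          intro e
          rw [hRf2, memR ⟨c, w, rfl⟩]
        have hEla : E.l a ∈ Submodule.span ℂ
            {x : A ⊗[ℂ] A | ∃ (c : A) (u : A ⊗[ℂ] A), x = (Δ c).l u} := by
          rw [hw1]; exact ⟨a, rfl⟩
        exact (inner c w _ hz (E.l a) hEla).symm
      | zero =>
        have : Rf m 0 = 0 := by simpa using Rsmul m 0 0
        rw [zero_mul, this, zero_mul]
      | add x y _ _ ihx ihy => rw [add_mul, ihx, ihy, Radd, add_mul]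
      | smul r x _ ih => rw [smul_mul_assoc, ih, Rsmul, smul_mul_assoc]
    calc b * Lf m a = b * E.l (Lf m a) := by rw [hLf1]
      _ = E.r b * Lf m a := E.compat _ b
      _ = Rf m (E.r b) * E.l a := outer (E.r b) (by rw [hw2]; exact ⟨b, rfl⟩)
      _ = Rf m b * E.l a := by rw [RErEq]
      _ = E.r (Rf m b) * a := E.compat a (Rf m b)
      _ = Rf m b * a := by rw [hRf1]
  -- module properties of multipliers on A (needs non-degeneracy of A)
  have modR : ∀ (m : Multiplier A) (x a : A), m.r (x * a) = x * m.r a := by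
    intro m x a
    refine sub_eq_zero.mp (hA1 _ fun e => ?_)
    rw [sub_mul, ← m.compat e (x * a), mul_assoc x (m.r a) e, ← m.compat e a,
      mul_assoc x a (m.l e), sub_self]
  have modL : ∀ (m : Multiplier A) (a x : A), m.l (a * x) = m.l a * x := by
    intro m a x
    refine sub_eq_zero.mp (hA2 _ fun e => ?_)
    rw [mul_sub, m.compat (a * x) e, ← mul_assoc e (m.l a) x, m.compat a e,
      mul_assoc (m.r e) a x, sub_self]
  have embMulL : ∀ (c : A) (m : Multiplier A),
      Multiplier.emb c * m = Multiplier.emb (m.r c) := by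
    intro c m
    refine Multiplier.ext' (LinearMap.ext fun x => ?_) (LinearMap.ext fun x => ?_)
    · exact m.compat x c
    · exact modR m x c
  have embMulR : ∀ (m : Multiplier A) (c : A),
      m * Multiplier.emb c = Multiplier.emb (m.l c) := by
    intro m c
    refine Multiplier.ext' (LinearMap.ext fun x => ?_) (LinearMap.ext fun x => ?_)
    · exact modL m c x
    · exact (m.compat c x).symm
  -- the extension
  refine ⟨fun m => ⟨{ toFun := Lf m, map_add' := Ladd m, map_smul' := Lsmul m },
      { toFun := Rf m, map_add' := Radd m, map_smul' := Rsmul m }, hcompat m⟩,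
    ⟨?_, ?_, ?_, ?_⟩, ?_⟩
  · -- additivity
    intro x y
    refine Multiplier.ext' (LinearMap.ext fun t => ?_) (LinearMap.ext fun t => ?_)
    · show Lf (x + y) t = Lf x t + Lf y t
      refine charL (x + y) t _ (by rw [map_add, hLf1, hLf1]) fun c => ?_
      have h : (x + y).r c = x.r c + y.r c := rfl
      rw [map_add, hLf2, hLf2, h, Daddl]
    · show Rf (x + y) t = Rf x t + Rf y t
      refine charR (x + y) t _ (by rw [map_add, hRf1, hRf1]) fun c => ?_
      have h : (x + y).l c = x.l c + y.l c := rfl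
      rw [map_add, hRf2, hRf2, h, Daddr]
  · -- multiplicativity
    intro x y
    refine Multiplier.ext' (LinearMap.ext fun t => ?_) (LinearMap.ext fun t => ?_)
    · show Lf (x * y) t = Lf x (Lf y t)
      refine charL (x * y) t _ (hLf1 x (Lf y t)) fun c => ?_
      rw [hLf2, hLf1, hLf2]
      rfl
    · show Rf (x * y) t = Rf y (Rf x t)
      refine charR (x * y) t _ (hRf1 y (Rf x t)) fun c => ?_
      rw [hRf2, hRf1, hRf2]
      rfl
  · -- unit
    refine Multiplier.ext' (LinearMap.ext fun t => ?_) (LinearMap.ext fun t => ?_)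
    · exact charL 1 t (E.l t) (hEll t) fun c => rfl
    · exact charR 1 t (E.r t) (hErr t) fun c => rfl
  · -- extension of Δ
    intro a
    refine Multiplier.ext' (LinearMap.ext fun t => ?_) (LinearMap.ext fun t => ?_)
    · refine charL (Multiplier.emb a) t ((Δ a).l t) (memL ⟨a, t, rfl⟩) fun c => ?_
      rw [← Dmull, DlE]
      rfl
    · refine charR (Multiplier.emb a) t ((Δ a).r t) (memR ⟨a, t, rfl⟩) fun c => ?_
      rw [← Dmulr, DrE]
      rfl
  · -- uniqueness
    rintro D ⟨hDadd, hDmul, hD1, hDemb⟩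
    funext m
    refine Multiplier.ext' (LinearMap.ext fun t => ?_) (LinearMap.ext fun t => ?_)
    · show (D m).l t = Lf m t
      have e1 : D m = E * D m := by
        rw [← hD1, ← hDmul, Multiplier.one_mul']
      refine (charL m t ((D m).l t) ?_ fun c => ?_).symm
      · exact (DFunLike.congr_fun (congrArg Multiplier.l e1) t).symm
      · have e2 : Δ c * D m = Δ (m.r c) := by
          rw [← hDemb c, ← hDemb (m.r c), ← hDmul, embMulL]
        show (Δ c * D m).l t = (Δ (m.r c)).l (E.l t)
        rw [e2, DlE]
    · show (D m).r t = Rf m t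
      have e1 : D m = D m * E := by
        rw [← hD1, ← hDmul, Multiplier.mul_one']
      refine (charR m t ((D m).r t) ?_ fun c => ?_).symm
      · exact (DFunLike.congr_fun (congrArg Multiplier.r e1) t).symm
      · have e2 : D m * Δ c = Δ (m.l c) := by
          rw [← hDemb c, ← hDemb (m.l c), ← hDmul, embMulR]
        show (D m * Δ c).r t = (Δ (m.l c)).r (E.r t)
        rw [e2, DrE]
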